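/- arXiv:math/0309443 — 2 statements merged into one kernel-verified Lean document; each statement's English description precedes it below -/
import Mathlib

section
/- With R the branch of ((z−ζ₊)(z−ζ₋))^{1/2} on ℂ∖Γ_C normalized by R(z)/z → 1 as z → ∞, one has R(−1) = 2B/(A+B+2) < 0 and R(1) = −2A/(A+B+2) > 0. -/
open Complex Set Filter Topology Bornology

noncomputable section

/-- The branch point `ζ₊`. -/
def zetaP (A B : ℝ) : ℂ :=
  (((B : ℂ) ^ 2 - (A : ℂ) ^ 2) +
      4 * Complex.I * ((Real.sqrt ((A + 1) * (B + 1) * (-A - B - 1)) : ℝ) : ℂ)) /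
    ((A : ℂ) + (B : ℂ) + 2) ^ 2

/-- The branch point `ζ₋`. -/
def zetaM (A B : ℝ) : ℂ :=
  (((B : ℂ) ^ 2 - (A : ℂ) ^ 2) -
      4 * Complex.I * ((Real.sqrt ((A + 1) * (B + 1) * (-A - B - 1)) : ℝ) : ℂ)) /
    ((A : ℂ) + (B : ℂ) + 2) ^ 2

/-- The set `Γ = { z : Re ∫_{ζ₋}^z ((t−ζ₊)(t−ζ₋))^{1/2}/(t²−1) dt = 0 }`. -/
def GammaSet (A B : ℝ) : Set ℂ :=
  {z | ∃ γ g : ℝ → ℂ, ContDiff ℝ 1 γ ∧ γ 0 = zetaM A B ∧ γ 1 = z ∧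
    (∀ t ∈ Set.Icc (0 : ℝ) 1, γ t ≠ 1 ∧ γ t ≠ -1) ∧
    ContinuousOn g (Set.Icc 0 1) ∧
    (∀ t ∈ Set.Icc (0 : ℝ) 1, g t ^ 2 = (γ t - zetaP A B) * (γ t - zetaM A B)) ∧
    (∫ t in (0:ℝ)..1, g t / ((γ t) ^ 2 - 1) * deriv γ t).re = 0}

/-- `ΓC` is the central arc of `Γ`. -/
def IsCenterArc (A B : ℝ) (ΓC : Set ℂ) : Prop :=
  IsCompact ΓC ∧ IsConnected ΓC ∧ zetaP A B ∈ ΓC ∧ zetaM A B ∈ ΓC ∧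
  ΓC ⊆ GammaSet A B ∧ ∀ z ∈ ΓC, z.im = 0 → -1 < z.re ∧ z.re < 1

/-- `R` is the single-valued analytic branch of `((z−ζ₊)(z−ζ₋))^{1/2}` on `ℂ ∖ Γ_C`
with `R(z)/z → 1` as `z → ∞`. -/
def IsSqrtBranch (A B : ℝ) (ΓC : Set ℂ) (R : ℂ → ℂ) : Prop :=
  DifferentiableOn ℂ R ΓCᶜ ∧
  (∀ z ∉ ΓC, R z ^ 2 = (z - zetaP A B) * (z - zetaM A B)) ∧
  Tendsto (fun z => R z / z) (Bornology.cobounded ℂ) (nhds 1)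

/-- conjugation swaps the branch points -/
lemma conj_zetaP (A B : ℝ) : (starRingEnd ℂ) (zetaP A B) = zetaM A B := by
  rw [zetaP, zetaM]
  simp only [map_div₀, map_add, map_sub, map_mul, map_pow, map_ofNat,
    Complex.conj_I, Complex.conj_ofReal]
  ring

lemma prod_at_one (A B : ℝ) (hA : -1 < A) (hB : -1 < B) (hAB1 : A + B < -1)
    (hs : A + B + 2 ≠ 0) :
    ((1:ℂ) - zetaP A B) * (1 - zetaM A B) = ((-2 * A / (A + B + 2) : ℝ) : ℂ) ^ 2 := by
  have hD : (0:ℝ) ≤ (A + 1) * (B + 1) * (-A - B - 1) := by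
    apply mul_nonneg (mul_nonneg (by linarith) (by linarith)) (by linarith)
  set d : ℝ := Real.sqrt ((A + 1) * (B + 1) * (-A - B - 1)) with hdef
  have hdC : ((d : ℝ) : ℂ) ^ 2 = ((A:ℂ) + 1) * ((B:ℂ) + 1) * (-(A:ℂ) - (B:ℂ) - 1) := by
    exact_mod_cast congrArg (Complex.ofReal) (Real.sq_sqrt hD)
  have hsC : ((A:ℂ) + B + 2) ≠ 0 := by
    intro h; apply hs
    exact_mod_cast (by exact_mod_cast h : ((A + B + 2 : ℝ) : ℂ) = 0)
  rw [zetaP, zetaM]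
  push_cast
  field_simp
  linear_combination (16) * hdC +
    (-16 * ((d:ℂ))^2) * Complex.I_sq

lemma prod_at_neg_one (A B : ℝ) (hA : -1 < A) (hB : -1 < B) (hAB1 : A + B < -1)
    (hs : A + B + 2 ≠ 0) :
    ((-1:ℂ) - zetaP A B) * (-1 - zetaM A B) = ((2 * B / (A + B + 2) : ℝ) : ℂ) ^ 2 := by
  have hD : (0:ℝ) ≤ (A + 1) * (B + 1) * (-A - B - 1) := by
    apply mul_nonneg (mul_nonneg (by linarith) (by linarith)) (by linarith)
  set d : ℝ := Real.sqrt ((A + 1) * (B + 1) * (-A - B - 1)) with hdef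
  have hdC : ((d : ℝ) : ℂ) ^ 2 = ((A:ℂ) + 1) * ((B:ℂ) + 1) * (-(A:ℂ) - (B:ℂ) - 1) := by
    exact_mod_cast congrArg (Complex.ofReal) (Real.sq_sqrt hD)
  have hsC : ((A:ℂ) + B + 2) ≠ 0 := by
    intro h; apply hs
    exact_mod_cast (by exact_mod_cast h : ((A + B + 2 : ℝ) : ℂ) = 0)
  rw [zetaP, zetaM]
  push_cast
  field_simp
  linear_combination (16) * hdC +
    (-16 * ((d:ℂ))^2) * Complex.I_sq

/-- `R(−1) = 2B/(A+B+2) < 0` and `R(1) = −2A/(A+B+2) > 0`. -/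
theorem R_values_at_plus_minus_one
    (A B : ℝ) (hA : -1 < A) (hA0 : A < 0) (hB : -1 < B) (hB0 : B < 0)
    (hAB : -2 < A + B) (hAB1 : A + B < -1)
    (ΓC : Set ℂ) (hΓC : IsCenterArc A B ΓC)
    (R : ℂ → ℂ) (hR : IsSqrtBranch A B ΓC R) :
    R (-1) = ((2 * B / (A + B + 2) : ℝ) : ℂ) ∧ (2 * B / (A + B + 2) : ℝ) < 0 ∧
    R 1 = ((-2 * A / (A + B + 2) : ℝ) : ℂ) ∧ 0 < (-2 * A / (A + B + 2) : ℝ) := by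
  have hs : (0:ℝ) < A + B + 2 := by linarith
  have hsC : ((A:ℂ) + B + 2) ≠ 0 := by
    intro h
    have : ((A + B + 2 : ℝ) : ℂ) = 0 := by push_cast; exact h
    exact absurd (Complex.ofReal_eq_zero.mp this) (by linarith)
  have hDpos : (0:ℝ) < (A + 1) * (B + 1) * (-A - B - 1) := by
    apply mul_pos (mul_pos (by linarith) (by linarith)) (by linarith)
  have hd0 : 0 < Real.sqrt ((A + 1) * (B + 1) * (-A - B - 1)) := Real.sqrt_pos.mpr hDpos
  -- the two branch points are distinct
  have hne : zetaP A B ≠ zetaM A B := by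
    intro h
    rw [zetaP, zetaM, div_eq_div_iff (pow_ne_zero 2 hsC) (pow_ne_zero 2 hsC)] at h
    have h8 : (8:ℂ) * Complex.I *
        ((Real.sqrt ((A + 1) * (B + 1) * (-A - B - 1)) : ℝ) : ℂ) * ((A:ℂ)+B+2)^2 = 0 := by
      linear_combination h
    have := mul_eq_zero.mp h8
    rcases this with h' | h'
    · rcases mul_eq_zero.mp h' with h'' | h''
      · rcases mul_eq_zero.mp h'' with h3 | h3
        · norm_num at h3
        · exact Complex.I_ne_zero h3
      · have : Real.sqrt ((A + 1) * (B + 1) * (-A - B - 1)) = 0 :=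
          Complex.ofReal_eq_zero.mp h''
        linarith
    · exact pow_ne_zero 2 hsC h'
  -- real points with |x| ≥ 1 are not on the arc
  have hnotin : ∀ x : ℝ, 1 ≤ |x| → (x:ℂ) ∉ ΓC := by
    intro x hx hmem
    have h := hΓC.2.2.2.2.2 (x:ℂ) hmem (Complex.ofReal_im x)
    rw [Complex.ofReal_re] at h
    have : |x| < 1 := abs_lt.mpr h
    linarith
  -- R is real and nonvanishing at real points off the arc
  have hreal : ∀ x : ℝ, (x:ℂ) ∉ ΓC → (R x).im = 0 ∧ (R x).re ≠ 0 := by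
    intro x hx
    have hsq := hR.2.1 (x:ℂ) hx
    have hprod : ((x:ℂ) - zetaP A B) * ((x:ℂ) - zetaM A B)
        = ((Complex.normSq ((x:ℂ) - zetaP A B) : ℝ) : ℂ) := by
      rw [← Complex.mul_conj, map_sub, Complex.conj_ofReal, conj_zetaP]
    have hpos : 0 < Complex.normSq ((x:ℂ) - zetaP A B) := by
      rw [Complex.normSq_pos, sub_ne_zero]
      intro hxz
      apply hne
      have : (starRingEnd ℂ) ((x:ℂ)) = (starRingEnd ℂ) (zetaP A B) := congrArg _ hxz
      rw [Complex.conj_ofReal, conj_zetaP] at this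
      rw [← hxz, ← this]
    rw [hprod] at hsq
    set t := Complex.normSq ((x:ℂ) - zetaP A B) with ht
    have h1 : (R x).re ^ 2 - (R x).im ^ 2 = t := by
      have := congrArg Complex.re hsq
      simpa [pow_two, Complex.mul_re] using this
    have h2 : (R x).re * (R x).im = 0 := by
      have := congrArg Complex.im hsq
      simp [pow_two, Complex.mul_im] at this
      linarith [this]
    constructor
    · rcases mul_eq_zero.mp h2 with h' | h'
      · exfalso; rw [h'] at h1; nlinarith
      · exact h'
    · intro h'
      rw [h'] at h1; nlinarith
  -- continuity of Re ∘ R ∘ ofReal off the arc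
  have hcont : ∀ S : Set ℝ, (∀ x ∈ S, (x:ℂ) ∉ ΓC) →
      ContinuousOn (fun x : ℝ => (R x).re) S := by
    intro S hS
    apply Complex.continuous_re.comp_continuousOn
    exact (hR.1.continuousOn.comp Complex.continuous_ofReal.continuousOn
      (fun x hx => hS x hx))
  -- tendsto along real axis
  have hcoT : Tendsto (fun x : ℝ => (x : ℂ)) atTop (cobounded ℂ) := by
    rw [← tendsto_norm_atTop_iff_cobounded]
    simpa using tendsto_abs_atTop_atTop
  have hcoB : Tendsto (fun x : ℝ => (x : ℂ)) atBot (cobounded ℂ) := by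
    rw [← tendsto_norm_atTop_iff_cobounded]
    simpa using tendsto_abs_atBot_atTop
  have hratio : ∀ x : ℝ, x ≠ 0 → (x:ℂ) ∉ ΓC → (R x / x).re = (R x).re / x := by
    intro x hx0 hx
    have him : (R x).im = 0 := (hreal x hx).1
    have hRe : R x = (((R x).re : ℝ) : ℂ) := Complex.ext rfl (by simp [him])
    rw [hRe, ← Complex.ofReal_div]
    simp
  -- get a far-out positive point on the right
  have httT : Tendsto (fun x : ℝ => (R x / x).re) atTop (nhds 1) := by
    have := (hR.2.2.comp hcoT)
    have h2 := (Complex.continuous_re.tendsto 1).comp this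
    simpa [Function.comp_def] using h2
  have httB : Tendsto (fun x : ℝ => (R x / x).re) atBot (nhds 1) := by
    have := (hR.2.2.comp hcoB)
    have h2 := (Complex.continuous_re.tendsto 1).comp this
    simpa [Function.comp_def] using h2
  obtain ⟨x₀, hx₀1, hx₀v⟩ : ∃ x₀ : ℝ, 1 ≤ x₀ ∧ 1/2 < (R x₀ / x₀).re := by
    have h1 := httT.eventually (eventually_gt_nhds (by norm_num : (1:ℝ)/2 < 1))
    have h2 := eventually_ge_atTop (1:ℝ)
    obtain ⟨x₀, hx⟩ := (h2.and h1).exists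
    exact ⟨x₀, hx.1, hx.2⟩
  obtain ⟨y₀, hy₀1, hy₀v⟩ : ∃ y₀ : ℝ, y₀ ≤ -1 ∧ 1/2 < (R y₀ / y₀).re := by
    have h1 := httB.eventually (eventually_gt_nhds (by norm_num : (1:ℝ)/2 < 1))
    have h2 := eventually_le_atBot (-1:ℝ)
    obtain ⟨y₀, hy⟩ := (h2.and h1).exists
    exact ⟨y₀, hy.1, hy.2⟩
  have hx₀notin : (x₀:ℂ) ∉ ΓC := hnotin x₀ (by rw [abs_of_pos (by linarith)]; linarith)
  have hy₀notin : (y₀:ℂ) ∉ ΓC := hnotin y₀ (by rw [abs_of_neg (by linarith)]; linarith)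
  have hfx₀ : 0 < (R x₀).re := by
    have hr := hratio x₀ (by linarith) hx₀notin
    rw [hr] at hx₀v
    have hx0p : (0:ℝ) < x₀ := by linarith
    have : (R (x₀:ℂ)).re = ((R (x₀:ℂ)).re / x₀) * x₀ :=
      (div_mul_cancel₀ _ (ne_of_gt hx0p)).symm
    rw [this]
    exact mul_pos (by linarith) hx0p
  have hfy₀ : (R y₀).re < 0 := by
    have hr := hratio y₀ (by linarith) hy₀notin
    rw [hr] at hy₀v
    have hy0n : y₀ < (0:ℝ) := by linarith
    have : (R (y₀:ℂ)).re = ((R (y₀:ℂ)).re / y₀) * y₀ :=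
      (div_mul_cancel₀ _ (ne_of_lt hy0n)).symm
    rw [this]
    exact mul_neg_of_pos_of_neg (by linarith) hy0n
  -- sign at 1
  have h1cast : ((1:ℝ):ℂ) = (1:ℂ) := Complex.ofReal_one
  have hm1cast : ((-1:ℝ):ℂ) = (-1:ℂ) := by push_cast; ring
  have h1notin : ((1:ℝ):ℂ) ∉ ΓC := hnotin 1 (by norm_num)
  have hm1notin : ((-1:ℝ):ℂ) ∉ ΓC := hnotin (-1) (by norm_num)
  have hf1pos : 0 < (R ((1:ℝ):ℂ)).re := by
    rcases lt_or_gt_of_ne (hreal 1 h1notin).2 with hneg | hpos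
    · exfalso
      have hc : ContinuousOn (fun x : ℝ => (R x).re) (Icc 1 x₀) := by
        apply hcont
        intro x hx
        exact hnotin x (by rw [abs_of_pos (by linarith [hx.1])]; linarith [hx.1])
      have hIvt := intermediate_value_Icc hx₀1 hc
      have h0 : (0:ℝ) ∈ Icc ((R ((1:ℝ):ℂ)).re) ((R ((x₀:ℝ):ℂ)).re) :=
        ⟨le_of_lt hneg, le_of_lt hfx₀⟩
      obtain ⟨c, hc1, hc2⟩ := hIvt h0
      have hcnotin : ((c:ℝ):ℂ) ∉ ΓC :=
        hnotin c (by rw [abs_of_pos (by linarith [hc1.1])]; linarith [hc1.1])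
      exact (hreal c hcnotin).2 hc2
    · exact hpos
  -- sign at -1
  have hfm1neg : (R ((-1:ℝ):ℂ)).re < 0 := by
    rcases lt_or_gt_of_ne (hreal (-1) hm1notin).2 with hneg | hpos
    · exact hneg
    · exfalso
      have hc : ContinuousOn (fun x : ℝ => (R x).re) (Icc y₀ (-1)) := by
        apply hcont
        intro x hx
        exact hnotin x (by rw [abs_of_neg (by linarith [hx.2])]; linarith [hx.2])
      have hIvt := intermediate_value_Icc hy₀1 hc
      have h0 : (0:ℝ) ∈ Icc ((R ((y₀:ℝ):ℂ)).re) ((R ((-1:ℝ):ℂ)).re) :=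
        ⟨le_of_lt hfy₀, le_of_lt hpos⟩
      obtain ⟨c, hc1, hc2⟩ := hIvt h0
      have hcnotin : ((c:ℝ):ℂ) ∉ ΓC :=
        hnotin c (by rw [abs_of_neg (by linarith [hc1.2])]; linarith [hc1.2])
      exact (hreal c hcnotin).2 hc2
  -- positivity of the claimed values
  have htA : 0 < -2 * A / (A + B + 2) := div_pos (by linarith) hs
  have htB : 2 * B / (A + B + 2) < 0 := div_neg_of_neg_of_pos (by linarith) hs
  -- value at 1
  have hval1 : R 1 = ((-2 * A / (A + B + 2) : ℝ) : ℂ) := by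
    have hsq := hR.2.1 ((1:ℝ):ℂ) h1notin
    rw [h1cast, prod_at_one A B hA hB hAB1 (by linarith)] at hsq
    have him : (R ((1:ℝ):ℂ)).im = 0 := (hreal 1 h1notin).1
    have hRe : R ((1:ℝ):ℂ) = (((R ((1:ℝ):ℂ)).re : ℝ) : ℂ) :=
      Complex.ext rfl (by simpa using him)
    rw [h1cast] at hRe
    rw [hRe, ← Complex.ofReal_pow, ← Complex.ofReal_pow] at hsq
    have hf1pos' : 0 < (R 1).re := by rw [← h1cast]; exact hf1pos
    have heq : (R 1).re ^ 2 = (-2 * A / (A + B + 2)) ^ 2 := by exact_mod_cast hsq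
    have hfac : ((R 1).re - (-2 * A / (A + B + 2))) *
        ((R 1).re + (-2 * A / (A + B + 2))) = 0 := by linear_combination heq
    rcases mul_eq_zero.mp hfac with h' | h'
    · rw [hRe]
      congr 1
      linarith
    · exfalso; linarith
  -- value at -1
  have hvalm1 : R (-1) = ((2 * B / (A + B + 2) : ℝ) : ℂ) := by
    have hsq := hR.2.1 ((-1:ℝ):ℂ) hm1notin
    rw [hm1cast, prod_at_neg_one A B hA hB hAB1 (by linarith)] at hsq
    have him : (R ((-1:ℝ):ℂ)).im = 0 := (hreal (-1) hm1notin).1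
    have hRe : R ((-1:ℝ):ℂ) = (((R ((-1:ℝ):ℂ)).re : ℝ) : ℂ) :=
      Complex.ext rfl (by simpa using him)
    rw [hm1cast] at hRe
    rw [hRe, ← Complex.ofReal_pow, ← Complex.ofReal_pow] at hsq
    have hfm1neg' : (R (-1)).re < 0 := by rw [← hm1cast]; exact hfm1neg
    have heq : (R (-1)).re ^ 2 = (2 * B / (A + B + 2)) ^ 2 := by exact_mod_cast hsq
    have hfac : ((R (-1)).re - (2 * B / (A + B + 2))) *
        ((R (-1)).re + (2 * B / (A + B + 2))) = 0 := by linear_combination heq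
    rcases mul_eq_zero.mp hfac with h' | h'
    · rw [hRe]
      congr 1
      linarith
    · exfalso; linarith
  exact ⟨hvalm1, htB, hval1, htA⟩

end
end

section
/- There exists ρ₀ > 0 such that for all 0 < ρ < ρ₀ and all sufficiently large r > 0, the following counterclockwise contour integrals hold: (A+B+2)/(2πi) ∮_{|z−1|=ρ} R(z)/(z²−1) dz = −A, (A+B+2)/(2πi) ∮_{|z+1|=ρ} R(z)/(z²−1) dz = −B, and (A+B+2)/(2πi) ∮_{|z|=r} R(z)/(z²−1) dz = A+B+2. Equivalently, the residues of R(z)/(z²−1) at z = 1 and z = −1 are −A/(A+B+2) and −B/(A+B+2). -/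
open Complex Set Filter Topology Bornology

noncomputable section

namespace ResiduesAux

variable {A B : ℝ}

lemma hS_ne (hpos : 0 < A + B + 2) : ((A:ℂ) + B + 2) ≠ 0 := by
  intro h
  have : ((A + B + 2 : ℝ) : ℂ) = 0 := by push_cast; linear_combination h
  exact hpos.ne' (by exact_mod_cast this)

lemma expand_prod (hpos : 0 < A + B + 2) (w : ℂ) :
    (w - zetaP A B) * (w - zetaM A B) =
      ((w * ((A:ℂ)+B+2)^2 - ((B:ℂ)^2 - (A:ℂ)^2))^2
        + 16 * ((Real.sqrt ((A + 1) * (B + 1) * (-A - B - 1)) : ℝ) : ℂ)^2) /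
      ((A:ℂ)+B+2)^4 := by
  have hS := hS_ne hpos
  unfold zetaP zetaM
  set s : ℂ := ((Real.sqrt ((A + 1) * (B + 1) * (-A - B - 1)) : ℝ) : ℂ) with hsdef
  set S : ℂ := (A:ℂ) + B + 2 with hSdef
  clear_value s S
  set D : ℂ := (B:ℂ)^2 - (A:ℂ)^2 with hDdef
  clear_value D
  field_simp
  linear_combination (-(16:ℂ)) * s^2 * Complex.I_sq

lemma prod_at_one (hpos : 0 < A + B + 2) (hq : 0 < (A + 1) * (B + 1) * (-A - B - 1)) :
    ((1:ℂ) - zetaP A B) * ((1:ℂ) - zetaM A B) = (2 * (A:ℂ) / ((A:ℂ)+B+2))^2 := by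
  have hS := hS_ne hpos
  have hs : ((Real.sqrt ((A + 1) * (B + 1) * (-A - B - 1)) : ℝ) : ℂ)^2
      = ((A:ℂ)+1) * ((B:ℂ)+1) * (-(A:ℂ)-(B:ℂ)-1) := by
    rw [← Complex.ofReal_pow, Real.sq_sqrt hq.le]; push_cast; ring
  rw [expand_prod hpos, hs]
  field_simp
  ring

lemma prod_at_neg_one (hpos : 0 < A + B + 2) (hq : 0 < (A + 1) * (B + 1) * (-A - B - 1)) :
    ((-1:ℂ) - zetaP A B) * ((-1:ℂ) - zetaM A B) = (2 * (B:ℂ) / ((A:ℂ)+B+2))^2 := by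
  have hS := hS_ne hpos
  have hs : ((Real.sqrt ((A + 1) * (B + 1) * (-A - B - 1)) : ℝ) : ℂ)^2
      = ((A:ℂ)+1) * ((B:ℂ)+1) * (-(A:ℂ)-(B:ℂ)-1) := by
    rw [← Complex.ofReal_pow, Real.sq_sqrt hq.le]; push_cast; ring
  rw [expand_prod hpos, hs]
  field_simp
  ring

lemma zetaM_eq_conj : zetaM A B = (starRingEnd ℂ) (zetaP A B) := by
  unfold zetaP zetaM
  simp only [map_div₀, map_add, map_sub, map_mul, map_pow, Complex.conj_ofReal, Complex.conj_I,
    map_ofNat]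
  ring

lemma zetaP_ne_zetaM (hpos : 0 < A + B + 2)
    (hq : 0 < (A + 1) * (B + 1) * (-A - B - 1)) : zetaP A B ≠ zetaM A B := by
  have hS := hS_ne hpos
  intro h
  unfold zetaP zetaM at h
  have hN := (div_left_inj' (pow_ne_zero 2 hS)).mp h
  have h8 : (8:ℂ) * Complex.I * ((Real.sqrt ((A + 1) * (B + 1) * (-A - B - 1)) : ℝ) : ℂ) = 0 := by
    linear_combination hN
  rcases mul_eq_zero.mp h8 with h' | h'
  · rcases mul_eq_zero.mp h' with h'' | h''
    · norm_num at h''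
    · exact Complex.I_ne_zero h''
  · have : Real.sqrt ((A + 1) * (B + 1) * (-A - B - 1)) = 0 := by exact_mod_cast h'
    exact absurd this (Real.sqrt_pos.mpr hq).ne'

lemma real_sub_zetaP_ne (hpos : 0 < A + B + 2)
    (hq : 0 < (A + 1) * (B + 1) * (-A - B - 1)) (x : ℝ) : (x:ℂ) - zetaP A B ≠ 0 := by
  intro h
  have hP : zetaP A B = (x:ℂ) := by linear_combination -h
  apply zetaP_ne_zetaM hpos hq
  rw [zetaM_eq_conj, hP, Complex.conj_ofReal]

/-- On real points off `ΓC`, `R x` is real with nonzero real part. -/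
lemma R_real_of_real (hpos : 0 < A + B + 2)
    (hq : 0 < (A + 1) * (B + 1) * (-A - B - 1))
    {ΓC : Set ℂ} {R : ℂ → ℂ}
    (hsq : ∀ z ∉ ΓC, R z ^ 2 = (z - zetaP A B) * (z - zetaM A B))
    {x : ℝ} (hx : (x:ℂ) ∉ ΓC) : (R x).im = 0 ∧ (R x).re ≠ 0 := by
  have h1 := hsq _ hx
  rw [zetaM_eq_conj] at h1
  have h2 : (x:ℂ) - (starRingEnd ℂ) (zetaP A B) = (starRingEnd ℂ) ((x:ℂ) - zetaP A B) := by
    rw [map_sub, Complex.conj_ofReal]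
  rw [h2, Complex.mul_conj] at h1
  have hr : 0 < Complex.normSq ((x:ℂ) - zetaP A B) :=
    Complex.normSq_pos.mpr (real_sub_zetaP_ne hpos hq x)
  set r := Complex.normSq ((x:ℂ) - zetaP A B)
  have hre : (R x).re * (R x).re - (R x).im * (R x).im = r := by
    have := congrArg Complex.re h1
    simpa [pow_two, Complex.mul_re] using this
  have him : (R x).re * (R x).im + (R x).im * (R x).re = 0 := by
    have := congrArg Complex.im h1
    simpa [pow_two, Complex.mul_im] using this
  constructor
  · rcases mul_eq_zero.mp (by linarith [him] : (R x).re * (R x).im = 0) with h | h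
    · nlinarith [hr, hre, sq_nonneg (R x).im]
    · exact h
  · intro h0
    nlinarith [hr, hre, sq_nonneg (R x).im, h0]

lemma sign_R {ΓC : Set ℂ} {R : ℂ → ℂ}
    (hray : ∀ x : ℝ, 1 ≤ |x| → (x:ℂ) ∉ ΓC)
    (hopen : IsOpen ΓCᶜ)
    (hdiff : DifferentiableOn ℂ R ΓCᶜ)
    (him : ∀ x : ℝ, (x:ℂ) ∉ ΓC → (R x).im = 0 ∧ (R x).re ≠ 0)
    (htend : Tendsto (fun z => R z / z) (Bornology.cobounded ℂ) (nhds 1)) :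
    0 < (R 1).re ∧ (R (-1)).re < 0 := by
  have e1 : ((1:ℝ):ℂ) = 1 := by norm_num
  have en1 : ((-1:ℝ):ℂ) = -1 := by norm_num
  have hRcont : ∀ x : ℝ, 1 ≤ |x| → ContinuousAt (fun y : ℝ => (R y).re) x := by
    intro x hx
    have h1 : ContinuousAt R (x:ℂ) :=
      (hdiff.differentiableAt (hopen.mem_nhds (hray x hx))).continuousAt
    exact (Complex.continuous_re.continuousAt.comp
      (h1.comp Complex.continuous_ofReal.continuousAt))
  have htopC : Tendsto (fun x:ℝ => (x:ℂ)) atTop (cobounded ℂ) := by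
    rw [← tendsto_norm_atTop_iff_cobounded]
    simpa [Complex.norm_real] using tendsto_abs_atTop_atTop
  have htop : Tendsto (fun x:ℝ => (R x).re / x) atTop (nhds 1) := by
    have h2 := (htend.comp htopC)
    have h3 := (Complex.continuous_re.continuousAt.tendsto.comp h2)
    simpa [Function.comp_def] using h3
  have hbotC : Tendsto (fun x:ℝ => (x:ℂ)) atBot (cobounded ℂ) := by
    rw [← tendsto_norm_atTop_iff_cobounded]
    simpa [Complex.norm_real] using tendsto_abs_atBot_atTop
  have hbot : Tendsto (fun x:ℝ => (R x).re / x) atBot (nhds 1) := by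
    have h2 := (htend.comp hbotC)
    have h3 := (Complex.continuous_re.continuousAt.tendsto.comp h2)
    simpa [Function.comp_def] using h3
  obtain ⟨X, hX2, hX1⟩ := ((htop.eventually (eventually_gt_nhds
    (by norm_num : (1/2:ℝ) < 1))).and (eventually_ge_atTop (1:ℝ))).exists
  have hX0 : (0:ℝ) < X := lt_of_lt_of_le one_pos hX1
  have hXpos : 0 < (R X).re := by
    have := (lt_div_iff₀ hX0).mp hX2
    linarith
  obtain ⟨Y, hY2, hY1⟩ := ((hbot.eventually (eventually_gt_nhds
    (by norm_num : (1/2:ℝ) < 1))).and (eventually_le_atBot (-1:ℝ))).exists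
  have hY0 : Y < 0 := lt_of_le_of_lt hY1 (by norm_num)
  have hYneg : (R Y).re < 0 := by
    have := (lt_div_iff_of_neg hY0).mp hY2
    linarith
  constructor
  · by_contra hne
    push_neg at hne
    have hre1 : (R ((1:ℝ):ℂ)).re ≠ 0 := (him 1 (hray 1 (by norm_num))).2
    rw [e1] at hre1
    have h0 : (R 1).re < 0 := lt_of_le_of_ne hne hre1
    have hcont : ContinuousOn (fun y : ℝ => (R y).re) (Set.Icc 1 X) := fun y hy =>
      (hRcont y (le_abs.mpr (Or.inl hy.1))).continuousWithinAt
    have hmem : (0:ℝ) ∈ Set.Icc ((R ((1:ℝ):ℂ)).re) ((R X).re) := by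
      rw [e1]; exact ⟨h0.le, hXpos.le⟩
    obtain ⟨c, hc, hc0⟩ := intermediate_value_Icc hX1 hcont hmem
    exact (him c (hray c (le_abs.mpr (Or.inl hc.1)))).2 hc0
  · by_contra hne
    push_neg at hne
    have hre1 : (R ((-1:ℝ):ℂ)).re ≠ 0 := (him (-1) (hray (-1) (by norm_num))).2
    rw [en1] at hre1
    have h0 : 0 < (R (-1)).re := lt_of_le_of_ne hne (Ne.symm hre1)
    have hcont : ContinuousOn (fun y : ℝ => (R y).re) (Set.Icc Y (-1)) := fun y hy =>
      (hRcont y (le_abs.mpr (Or.inr (by linarith [hy.2])))).continuousWithinAt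
    have hmem : (0:ℝ) ∈ Set.Icc ((R ((Y:ℝ):ℂ)).re) ((R ((-1:ℝ):ℂ)).re) := by
      rw [en1]; exact ⟨hYneg.le, h0.le⟩
    obtain ⟨c, hc, hc0⟩ := intermediate_value_Icc hY1 hcont hmem
    exact (him c (hray c (le_abs.mpr (Or.inr (by linarith [hc.2]))))).2 hc0

open Metric in
lemma small_circle {R : ℂ → ℂ} {U : Set ℂ} (hdiff : DifferentiableOn ℂ R U)
    {p : ℂ} (hp2 : p^2 = 1) {ρ : ℝ} (hball : closedBall p ρ ⊆ U) (hρ : 0 < ρ) (hρ1 : ρ < 1) :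
    (∮ z in C(p, ρ), R z / (z^2 - 1)) = (2 * Real.pi * Complex.I) * (R p / (p + p)) := by
  have hpn : ‖p‖ = 1 := by
    have h : ‖p‖^2 = 1 := by rw [← norm_pow, hp2, norm_one]
    nlinarith [norm_nonneg p]
  have hpne : ∀ z ∈ closedBall p ρ, z + p ≠ 0 := by
    intro z hz h0
    have hz' : z = -p := by linear_combination h0
    rw [mem_closedBall, hz', dist_eq_norm] at hz
    have hnp : ‖-p - p‖ = 2 := by
      have e : -p - p = (-2 : ℂ) * p := by ring
      rw [e, norm_mul, hpn]; simp
    rw [hnp] at hz; linarith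
  have hg : DifferentiableOn ℂ (fun z => R z / (z + p)) (closedBall p ρ) :=
    (hdiff.mono hball).div ((differentiableOn_id).add (differentiableOn_const p)) hpne
  have key := hg.circleIntegral_sub_inv_smul (mem_ball_self hρ)
  have hcong : (∮ z in C(p, ρ), R z / (z^2 - 1))
      = ∮ z in C(p, ρ), (z - p)⁻¹ • (R z / (z + p)) := by
    apply circleIntegral.integral_congr hρ.le
    intro z hz
    have hzs : dist z p = ρ := mem_sphere.mp hz
    have hzp : z ≠ p := by
      intro h; rw [h, dist_self] at hzs; linarith
    have hzp' : z + p ≠ 0 := hpne z (by rw [mem_closedBall, hzs])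
    have hfac : z^2 - 1 = (z - p) * (z + p) := by linear_combination hp2
    show R z / (z^2 - 1) = (z - p)⁻¹ • (R z / (z + p))
    rw [smul_eq_mul, hfac]
    field_simp [sub_ne_zero.mpr hzp, hzp']
  rw [hcong, key, smul_eq_mul]

open Metric in
lemma big_circle {R : ℂ → ℂ} {ΓC : Set ℂ} (hopen : IsOpen ΓCᶜ)
    (hdiff : DifferentiableOn ℂ R ΓCᶜ)
    {M : ℝ} (hM : ∀ z ∈ ΓC, ‖z‖ ≤ M)
    {zP zM : ℂ} (hsq : ∀ z ∉ ΓC, R z ^ 2 = (z - zP) * (z - zM))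
    (htend : Tendsto (fun z => R z / z) (Bornology.cobounded ℂ) (nhds 1)) :
    ∃ r₀ : ℝ, ∀ r : ℝ, r₀ < r →
      (∮ z in C(0, r), R z / (z ^ 2 - 1)) = 2 * Real.pi * Complex.I := by
  have hev : ∀ᶠ z in Bornology.cobounded ℂ, ‖R z / z - 1‖ ≤ 1/2 := by
    have := Metric.tendsto_nhds.mp htend (1/2) (by norm_num)
    filter_upwards [this] with z hz
    rw [dist_eq_norm] at hz; exact hz.le
  rw [← comap_norm_atTop, eventually_comap] at hev
  rw [eventually_atTop] at hev
  obtain ⟨a, ha⟩ := hev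
  have hbnd : ∀ z : ℂ, a ≤ ‖z‖ → ‖R z / z - 1‖ ≤ 1/2 := fun z hz => ha ‖z‖ hz z rfl
  set C : ℝ := ‖zP + zM‖ + ‖zP * zM‖ with hCdef
  have hC0 : 0 ≤ C := by positivity
  set T : ℝ := max (max (|M| + 1) (|a| + 1)) 2 with hTdef
  have hT2 : (2:ℝ) ≤ T := le_max_right _ _
  have hTM : |M| + 1 ≤ T := le_trans (le_max_left _ _) (le_max_left _ _)
  have hTa : |a| + 1 ≤ T := le_trans (le_max_right _ _) (le_max_left _ _)
  have hnotΓ : ∀ z : ℂ, T ≤ ‖z‖ → z ∉ ΓC := by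
    intro z hz hmem
    have := hM z hmem
    have : ‖z‖ ≤ |M| := this.trans (le_abs_self M)
    linarith
  have hkey : ∀ z : ℂ, T ≤ ‖z‖ → ‖R z - z‖ ≤ C := by
    intro z hz
    have hz0 : (1:ℝ) ≤ ‖z‖ := by linarith
    have hzne : z ≠ 0 := by intro h; rw [h, norm_zero] at hz0; linarith
    have h12 : ‖R z / z - 1‖ ≤ 1/2 := hbnd z (by linarith [le_abs_self a])
    have hRz : ‖R z - z‖ ≤ ‖z‖ / 2 := by
      have e : R z - z = z * (R z / z - 1) := by field_simp
      rw [e, norm_mul]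
      calc ‖z‖ * ‖R z / z - 1‖ ≤ ‖z‖ * (1/2) := by
            exact mul_le_mul_of_nonneg_left h12 (norm_nonneg z)
        _ = ‖z‖ / 2 := by ring
    have hsum : (3/2) * ‖z‖ ≤ ‖R z + z‖ := by
      have e2 : (2:ℂ) * z = (R z + z) - (R z - z) := by ring
      have := norm_sub_le (R z + z) (R z - z)
      rw [← e2, norm_mul] at this
      simp only [Complex.norm_ofNat] at this
      linarith
    have hsumne : ‖z‖ ≤ ‖R z + z‖ := by linarith
    have hident : (R z - z) * (R z + z) = -(zP + zM) * z + zP * zM := by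
      linear_combination hsq z (hnotΓ z hz)
    have hnum : ‖(R z - z) * (R z + z)‖ ≤ C * ‖z‖ := by
      rw [hident]
      calc ‖-(zP + zM) * z + zP * zM‖ ≤ ‖-(zP + zM) * z‖ + ‖zP * zM‖ := norm_add_le _ _
        _ = ‖zP + zM‖ * ‖z‖ + ‖zP * zM‖ := by rw [norm_mul, norm_neg]
        _ ≤ ‖zP + zM‖ * ‖z‖ + ‖zP * zM‖ * ‖z‖ := by
            nlinarith [norm_nonneg (zP * zM)]
        _ = C * ‖z‖ := by rw [hCdef]; ring
    rw [norm_mul] at hnum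
    nlinarith [norm_nonneg (R z - z), norm_nonneg (R z + z), norm_nonneg z]
  have hd' : ∀ z : ℂ, T ≤ ‖z‖ → DifferentiableAt ℂ (fun w => R w / (w ^ 2 - 1)) z := by
    intro z hz
    have hz2 : z ^ 2 - 1 ≠ 0 := by
      intro h
      have : ‖z ^ 2‖ = ‖(1:ℂ)‖ := by rw [show z ^ 2 = 1 from by linear_combination h]
      rw [norm_pow, norm_one] at this
      nlinarith
    exact (hdiff.differentiableAt (hopen.mem_nhds (hnotΓ z hz))).div
      (((differentiableAt_id).pow 2).sub (differentiableAt_const 1)) hz2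
  have hI : ∀ s : ℝ, T < s →
      ‖(∮ z in C(0, s), R z / (z ^ 2 - 1)) - 2 * Real.pi * Complex.I‖
        ≤ 2 * Real.pi * (C * s + 1) / (s ^ 2 - 1) := by
    intro s hs
    have hs0 : (0:ℝ) < s := by linarith
    have hfcont : ContinuousOn (fun w => R w / (w ^ 2 - 1)) (sphere (0:ℂ) s) := by
      intro z hz
      have hzn : ‖z‖ = s := by simpa [mem_sphere_iff_norm] using hz
      exact (hd' z (by rw [hzn]; exact hs.le)).continuousAt.continuousWithinAt
    have hfint : CircleIntegrable (fun w => R w / (w ^ 2 - 1)) 0 s :=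
      hfcont.circleIntegrable hs0.le
    have hinvcont : ContinuousOn (fun w : ℂ => w⁻¹) (sphere (0:ℂ) s) := by
      intro z hz
      have hzn : ‖z‖ = s := by simpa [mem_sphere_iff_norm] using hz
      have : z ≠ 0 := by intro h; rw [h, norm_zero] at hzn; linarith
      exact (continuousAt_inv₀ this).continuousWithinAt
    have hinvint : CircleIntegrable (fun w : ℂ => w⁻¹) 0 s :=
      hinvcont.circleIntegrable hs0.le
    have hinv : (∮ z in C(0, s), z⁻¹) = 2 * Real.pi * Complex.I := by
      have := circleIntegral.integral_sub_inv_of_mem_ball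
        (mem_ball_self hs0 : (0:ℂ) ∈ ball 0 s)
      simpa using this
    have hsub : (∮ z in C(0, s), R z / (z ^ 2 - 1)) - 2 * Real.pi * Complex.I
        = ∮ z in C(0, s), (R z / (z ^ 2 - 1) - z⁻¹) := by
      rw [circleIntegral.integral_sub hfint hinvint, hinv]
    rw [hsub]
    have hptwise : ∀ z ∈ sphere (0:ℂ) s,
        ‖R z / (z ^ 2 - 1) - z⁻¹‖ ≤ (C * s + 1) / (s * (s ^ 2 - 1)) := by
      intro z hz
      have hzn : ‖z‖ = s := by simpa [mem_sphere_iff_norm] using hz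
      have hzT : T ≤ ‖z‖ := by rw [hzn]; exact hs.le
      have hzne : z ≠ 0 := by intro h; rw [h, norm_zero] at hzn; linarith
      have hz2 : z ^ 2 - 1 ≠ 0 := by
        intro h
        have : ‖z ^ 2‖ = ‖(1:ℂ)‖ := by rw [show z ^ 2 = 1 from by linear_combination h]
        rw [norm_pow, norm_one, hzn] at this
        nlinarith
      have hident : R z / (z ^ 2 - 1) - z⁻¹ = (z * (R z - z) + 1) / (z * (z ^ 2 - 1)) := by
        field_simp
        ring
      rw [hident, norm_div]
      have hnum : ‖z * (R z - z) + 1‖ ≤ C * s + 1 := by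
        calc ‖z * (R z - z) + 1‖ ≤ ‖z * (R z - z)‖ + ‖(1:ℂ)‖ := norm_add_le _ _
          _ = ‖z‖ * ‖R z - z‖ + 1 := by rw [norm_mul, norm_one]
          _ ≤ s * C + 1 := by
              rw [hzn]
              nlinarith [hkey z hzT, norm_nonneg (R z - z), hs0]
          _ = C * s + 1 := by ring
      have hden : s * (s ^ 2 - 1) ≤ ‖z * (z ^ 2 - 1)‖ := by
        rw [norm_mul, hzn]
        have h1 : s ^ 2 - 1 ≤ ‖z ^ 2 - 1‖ := by
          have := norm_sub_norm_le (z ^ 2) (1:ℂ)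
          rw [norm_pow, norm_one, hzn] at this
          linarith
        nlinarith
      have hdenpos : (0:ℝ) < s * (s ^ 2 - 1) := by nlinarith
      exact div_le_div₀ (by positivity) hnum hdenpos hden
    have hle := circleIntegral.norm_integral_le_of_norm_le_const hs0.le hptwise
    have heq : 2 * Real.pi * s * ((C * s + 1) / (s * (s ^ 2 - 1)))
        = 2 * Real.pi * (C * s + 1) / (s ^ 2 - 1) := by
      have hs2 : s ^ 2 - 1 ≠ 0 := by nlinarith
      field_simp
    calc ‖∮ z in C(0, s), (R z / (z ^ 2 - 1) - z⁻¹)‖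
        ≤ 2 * Real.pi * s * ((C * s + 1) / (s * (s ^ 2 - 1))) := by
          simpa [abs_of_pos hs0] using hle
      _ = 2 * Real.pi * (C * s + 1) / (s ^ 2 - 1) := heq
  have hann : ∀ r s : ℝ, T < r → r ≤ s →
      (∮ z in C(0, s), R z / (z ^ 2 - 1)) = ∮ z in C(0, r), R z / (z ^ 2 - 1) := by
    intro r s hr hrs
    have hr0 : (0:ℝ) < r := by linarith
    apply circleIntegral_eq_of_differentiable_on_annulus_off_countable hr0 hrs
      Set.countable_empty
    · intro z hz
      obtain ⟨hz1, hz2⟩ := hz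
      rw [mem_closedBall_zero_iff] at hz1
      rw [mem_ball_zero_iff, not_lt] at hz2
      exact (hd' z (hr.le.trans hz2)).continuousAt.continuousWithinAt
    · intro z hz
      obtain ⟨⟨hz1, hz2⟩, -⟩ := hz
      rw [mem_closedBall_zero_iff, not_le] at hz2
      exact hd' z (by linarith)
  refine ⟨T, fun r hr => ?_⟩
  have hnorm : ∀ ε : ℝ, 0 < ε →
      ‖(∮ z in C(0, r), R z / (z ^ 2 - 1)) - 2 * Real.pi * Complex.I‖ ≤ ε := by
    intro ε hε
    set s : ℝ := max r (4 * Real.pi * (C + 1) / ε) with hsdef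
    have hrs : r ≤ s := le_max_left _ _
    have hsT : T < s := lt_of_lt_of_le hr hrs
    have hs2 : (2:ℝ) ≤ s := by linarith
    have hs4 : 4 * Real.pi * (C + 1) / ε ≤ s := le_max_right _ _
    have hs4' : 4 * Real.pi * (C + 1) ≤ ε * s := by
      rw [div_le_iff₀ hε] at hs4; linarith
    rw [← hann r s hr hrs]
    refine (hI s hsT).trans ?_
    rw [div_le_iff₀ (by nlinarith : (0:ℝ) < s ^ 2 - 1)]
    nlinarith [Real.pi_pos, mul_le_mul_of_nonneg_right hs4' (by linarith : (0:ℝ) ≤ s),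
      mul_nonneg (mul_nonneg (by positivity : (0:ℝ) ≤ 2 * Real.pi) hC0) (by linarith : (0:ℝ) ≤ s - 1),
      mul_nonneg hε.le (by nlinarith : (0:ℝ) ≤ s ^ 2 - 2)]
  have h0 : ‖(∮ z in C(0, r), R z / (z ^ 2 - 1)) - 2 * Real.pi * Complex.I‖ ≤ 0 :=
    le_of_forall_pos_le_add (by intro ε hε; simpa using hnorm ε hε)
  exact norm_sub_eq_zero_iff.mp (le_antisymm h0 (norm_nonneg _))

end ResiduesAux

open ResiduesAux Metric

/-- residue computations.  For all small enough `ρ > 0` the counterclockwise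
integrals of `((A+B+2)/(2πi)) R(z)/(z²−1)` over `|z−1|=ρ` and `|z+1|=ρ` equal `−A` and
`−B` respectively, and over `|z| = r` (for all sufficiently large `r`) the integral
equals `A+B+2`. -/
theorem residues_of_R_over_z_sq_minus_one
    (A B : ℝ) (hA : -1 < A) (hA0 : A < 0) (hB : -1 < B) (hB0 : B < 0)
    (hAB : -2 < A + B) (hAB1 : A + B < -1)
    (ΓC : Set ℂ) (hΓC : IsCenterArc A B ΓC)
    (R : ℂ → ℂ) (hR : IsSqrtBranch A B ΓC R) :
    (∃ ρ₀ > (0:ℝ), ∀ ρ : ℝ, 0 < ρ → ρ < ρ₀ →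
      (((A : ℂ) + B + 2) / (2 * Real.pi * Complex.I)) *
          (∮ z in C(1, ρ), R z / (z ^ 2 - 1)) = -(A : ℂ) ∧
      (((A : ℂ) + B + 2) / (2 * Real.pi * Complex.I)) *
          (∮ z in C(-1, ρ), R z / (z ^ 2 - 1)) = -(B : ℂ)) ∧
    (∃ r₀ : ℝ, ∀ r : ℝ, r₀ < r →
      (((A : ℂ) + B + 2) / (2 * Real.pi * Complex.I)) *
          (∮ z in C(0, r), R z / (z ^ 2 - 1)) = (A : ℂ) + B + 2) := by
  obtain ⟨hcomp, hconn, hzp, hzm, hsubΓ, hreal⟩ := hΓC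
  obtain ⟨hdiff, hsq, htend⟩ := hR
  have hpos : 0 < A + B + 2 := by linarith
  have hq : 0 < (A + 1) * (B + 1) * (-A - B - 1) := by
    apply mul_pos (mul_pos (by linarith) (by linarith)) (by linarith)
  have hS := hS_ne (A := A) (B := B) hpos
  have h2pi : (2 * (Real.pi : ℂ) * Complex.I) ≠ 0 := by
    simp [Real.pi_ne_zero, Complex.I_ne_zero, Complex.ofReal_ne_zero]
  have hopen : IsOpen ΓCᶜ := hcomp.isClosed.isOpen_compl
  have hray : ∀ x : ℝ, 1 ≤ |x| → (x:ℂ) ∉ ΓC := by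
    intro x hx hmem
    have h := hreal (x:ℂ) hmem (by simp)
    rw [Complex.ofReal_re] at h
    have : |x| < 1 := abs_lt.mpr ⟨h.1, h.2⟩
    linarith
  have e1 : ((1:ℝ):ℂ) = 1 := by norm_num
  have en1 : ((-1:ℝ):ℂ) = -1 := by norm_num
  have h1not : (1:ℂ) ∉ ΓC := e1 ▸ hray 1 (by norm_num)
  have hn1not : (-1:ℂ) ∉ ΓC := en1 ▸ hray (-1) (by norm_num)
  have him : ∀ x : ℝ, (x:ℂ) ∉ ΓC → (R x).im = 0 ∧ (R x).re ≠ 0 :=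
    fun x hx => R_real_of_real hpos hq hsq hx
  obtain ⟨hpos1, hneg1⟩ := sign_R hray hopen hdiff him htend
  -- exact values of R 1 and R (-1)
  have hR1im : (R 1).im = 0 := by have := (him 1 (e1 ▸ h1not)).1; rwa [e1] at this
  have hRn1im : (R (-1)).im = 0 := by have := (him (-1) (en1 ▸ hn1not)).1; rwa [en1] at this
  have hR1real : R 1 = (((R 1).re : ℝ) : ℂ) := Complex.ext (by simp) (by simp [hR1im])
  have hRn1real : R (-1) = (((R (-1)).re : ℝ) : ℂ) := Complex.ext (by simp) (by simp [hRn1im])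
  have hR1 : R 1 = -(2 * (A:ℂ)) / ((A:ℂ) + B + 2) := by
    have hsq1 : R 1 ^ 2 = (2 * (A:ℂ) / ((A:ℂ)+B+2))^2 := by
      rw [hsq 1 h1not]; exact prod_at_one hpos hq
    set u : ℝ := (R 1).re with hu
    set v : ℝ := 2 * A / (A + B + 2) with hv
    have hvC : (2 * (A:ℂ) / ((A:ℂ)+B+2)) = ((v:ℝ):ℂ) := by rw [hv]; push_cast; ring
    rw [hR1real, hvC, ← Complex.ofReal_pow, ← Complex.ofReal_pow] at hsq1
    have huv : u^2 = v^2 := by exact_mod_cast hsq1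
    have hvneg : v < 0 := div_neg_of_neg_of_pos (by linarith) hpos
    have huv' : u = -v := by nlinarith [hpos1]
    rw [hR1real, huv', hv]
    push_cast
    field_simp
  have hRn1 : R (-1) = 2 * (B:ℂ) / ((A:ℂ) + B + 2) := by
    have hsq1 : R (-1) ^ 2 = (2 * (B:ℂ) / ((A:ℂ)+B+2))^2 := by
      rw [hsq (-1) hn1not]; exact prod_at_neg_one hpos hq
    set u : ℝ := (R (-1)).re with hu
    set v : ℝ := 2 * B / (A + B + 2) with hv
    have hvC : (2 * (B:ℂ) / ((A:ℂ)+B+2)) = ((v:ℝ):ℂ) := by rw [hv]; push_cast; ring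
    rw [hRn1real, hvC, ← Complex.ofReal_pow, ← Complex.ofReal_pow] at hsq1
    have huv : u^2 = v^2 := by exact_mod_cast hsq1
    have hvneg : v < 0 := div_neg_of_neg_of_pos (by linarith) hpos
    have huv' : u = v := by nlinarith [hneg1]
    rw [hRn1real, huv', hv]
    push_cast
    ring
  constructor
  · -- small circles
    have hΓne : ΓC.Nonempty := ⟨zetaP A B, hzp⟩
    have hd1 : 0 < infDist 1 ΓC :=
      (hcomp.isClosed.notMem_iff_infDist_pos hΓne).mp h1not
    have hd2 : 0 < infDist (-1) ΓC :=
      (hcomp.isClosed.notMem_iff_infDist_pos hΓne).mp hn1not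
    refine ⟨min (min (infDist 1 ΓC) (infDist (-1) ΓC)) 1, by positivity, fun ρ hρ0 hρ1 => ?_⟩
    have hρlt1 : ρ < 1 := lt_of_lt_of_le hρ1 (min_le_right _ _)
    have hρd1 : ρ < infDist 1 ΓC :=
      lt_of_lt_of_le hρ1 ((min_le_left _ _).trans (min_le_left _ _))
    have hρd2 : ρ < infDist (-1) ΓC :=
      lt_of_lt_of_le hρ1 ((min_le_left _ _).trans (min_le_right _ _))
    have hball1 : closedBall (1:ℂ) ρ ⊆ ΓCᶜ := by
      intro z hz hmem
      have := infDist_le_dist_of_mem (x := (1:ℂ)) hmem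
      rw [mem_closedBall] at hz
      rw [dist_comm] at this
      linarith
    have hball2 : closedBall (-1:ℂ) ρ ⊆ ΓCᶜ := by
      intro z hz hmem
      have := infDist_le_dist_of_mem (x := (-1:ℂ)) hmem
      rw [mem_closedBall] at hz
      rw [dist_comm] at this
      linarith
    constructor
    · rw [small_circle hdiff (by norm_num : ((1:ℂ))^2 = 1) hball1 hρ0 hρlt1, hR1]
      field_simp
      ring
    · rw [small_circle hdiff (by norm_num : ((-1:ℂ))^2 = 1) hball2 hρ0 hρlt1, hRn1]
      field_simp
      ring
  · -- big circle
    obtain ⟨M, hM⟩ := isBounded_iff_forall_norm_le.mp hcomp.isBounded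
    obtain ⟨r₀, hr₀⟩ := big_circle hopen hdiff hM hsq htend
    refine ⟨r₀, fun r hr => ?_⟩
    rw [hr₀ r hr]
    field_simp

end
end
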